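/- Let E be a finite-dimensional real vector space, C a nonzero cone of E, and u a linear endomorphism of E such that u(C \ {0}) ⊆ C \ {0}. Then u^∞(C) := ⋂ₙ≥₀ uⁿ(C) is a nonzero cone of E, and u(u^∞(C)) = u^∞(C). -/

import Mathlib

/-!
Since `u` kills no nonzero vector of `C`, neither does any `uⁿ`, and compactness of
`C ∩ sphere 0 1` bounds `uⁿ` below on `C`: `δ ‖x‖ ≤ ‖uⁿ x‖`. So `uⁿ` is proper on `C` and every
`uⁿ(C)` is a closed cone; these decrease, so their intersection is a closed cone. A nonzero vector
in it is a point of the nested compact sets `uⁿ(C) ∩ sphere 0 1`, and a preimage under `u` of a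
point `y` of it is a point of the nested compact sets `uⁿ(C) ∩ u⁻¹{y}`.
-/

def IsCone {E : Type*} [NormedAddCommGroup E] [NormedSpace ℝ E] (C : Set E) : Prop :=
  IsClosed C ∧ (0 : E) ∈ C ∧ (∀ x ∈ C, ∀ y ∈ C, x + y ∈ C) ∧
    ∀ t : ℝ, 0 < t → ∀ x ∈ C, t • x ∈ C

open Set Metric

theorem IsCone.isClosed {E : Type*} [NormedAddCommGroup E] [NormedSpace ℝ E] {C : Set E}
    (hC : IsCone C) : IsClosed C :=
  hC.1

theorem IsCone.zero_mem {E : Type*} [NormedAddCommGroup E] [NormedSpace ℝ E] {C : Set E}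
    (hC : IsCone C) : (0 : E) ∈ C :=
  hC.2.1

theorem IsCone.add_mem {E : Type*} [NormedAddCommGroup E] [NormedSpace ℝ E] {C : Set E}
    (hC : IsCone C) {x y : E} (hx : x ∈ C) (hy : y ∈ C) : x + y ∈ C :=
  hC.2.2.1 x hx y hy

theorem IsCone.smul_mem {E : Type*} [NormedAddCommGroup E] [NormedSpace ℝ E] {C : Set E}
    (hC : IsCone C) {t : ℝ} (ht : 0 < t) {x : E} (hx : x ∈ C) : t • x ∈ C :=
  hC.2.2.2 t ht x hx

theorem IsCone.image {E F : Type*} [NormedAddCommGroup E] [NormedSpace ℝ E]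
    [NormedAddCommGroup F] [NormedSpace ℝ F] {C : Set E} (hC : IsCone C) (f : E →ₗ[ℝ] F)
    (hclosed : IsClosed (f '' C)) : IsCone (f '' C) := by
  refine ⟨hclosed, ⟨0, hC.zero_mem, map_zero f⟩, ?_, ?_⟩
  · rintro _ ⟨x, hx, rfl⟩ _ ⟨y, hy, rfl⟩
    exact ⟨x + y, hC.add_mem hx hy, map_add f x y⟩
  · rintro t ht _ ⟨x, hx, rfl⟩
    exact ⟨t • x, hC.smul_mem ht hx, map_smul f t x⟩

theorem IsCone.iInter {E ι : Type*} [NormedAddCommGroup E] [NormedSpace ℝ E] {S : ι → Set E}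
    (hS : ∀ i, IsCone (S i)) : IsCone (⋂ i, S i) := by
  refine ⟨isClosed_iInter fun i => (hS i).isClosed, mem_iInter.2 fun i => (hS i).zero_mem, ?_, ?_⟩
  · intro x hx y hy
    simp only [mem_iInter] at hx hy ⊢
    exact fun i => (hS i).add_mem (hx i) (hy i)
  · intro t ht x hx
    simp only [mem_iInter] at hx ⊢
    exact fun i => (hS i).smul_mem ht (hx i)

section PositivelyHomogeneous

variable {E F : Type*} [NormedAddCommGroup E] [NormedSpace ℝ E]
  [NormedAddCommGroup F] [NormedSpace ℝ F] {C : Set E}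

theorem inv_norm_smul_mem_inter_sphere (hsmul : ∀ t : ℝ, 0 < t → ∀ x ∈ C, t • x ∈ C)
    {x : E} (hx : x ∈ C) (hx0 : x ≠ 0) : ‖x‖⁻¹ • x ∈ C ∩ sphere 0 1 :=
  ⟨hsmul _ (inv_pos.2 (norm_pos_iff.2 hx0)) x hx, by simp [norm_smul, hx0]⟩

theorem exists_pos_mul_norm_le_norm_apply [FiniteDimensional ℝ E] (hC : IsClosed C)
    (hsmul : ∀ t : ℝ, 0 < t → ∀ x ∈ C, t • x ∈ C) {f : E →ₗ[ℝ] F}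
    (hf : ∀ x ∈ C, x ≠ 0 → f x ≠ 0) : ∃ δ > 0, ∀ x ∈ C, δ * ‖x‖ ≤ ‖f x‖ := by
  have hK : IsCompact (C ∩ sphere 0 1) := (isCompact_sphere 0 1).inter_left hC
  obtain ⟨δ, hδ, hδK⟩ := hK.exists_forall_le'
    (continuous_norm.comp f.continuous_of_finiteDimensional).continuousOn
    (a := 0) fun y hy => norm_pos_iff.2 <| hf y hy.1 (ne_zero_of_mem_sphere one_ne_zero ⟨y, hy.2⟩)
  refine ⟨δ, hδ, fun x hx => ?_⟩
  rcases eq_or_ne x 0 with rfl | hx0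
  · simp
  have h : δ ≤ ‖f (‖x‖⁻¹ • x)‖ := hδK _ (inv_norm_smul_mem_inter_sphere hsmul hx hx0)
  rw [map_smul, norm_smul, norm_inv, norm_norm] at h
  rw [mul_comm]
  exact (le_inv_mul_iff₀ (norm_pos_iff.2 hx0)).1 h

theorem isCompact_inter_preimage_closedBall [FiniteDimensional ℝ E] (hC : IsClosed C)
    (hsmul : ∀ t : ℝ, 0 < t → ∀ x ∈ C, t • x ∈ C) {f : E →ₗ[ℝ] F}
    (hf : ∀ x ∈ C, x ≠ 0 → f x ≠ 0) (z : F) (r : ℝ) :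
    IsCompact (C ∩ f ⁻¹' closedBall z r) := by
  obtain ⟨δ, hδ, hδC⟩ := exists_pos_mul_norm_le_norm_apply hC hsmul hf
  refine isCompact_of_isClosed_isBounded
    (hC.inter (isClosed_closedBall.preimage f.continuous_of_finiteDimensional)) ?_
  refine (isBounded_closedBall (x := (0 : E)) (r := (‖z‖ + r) / δ)).subset fun x hx => ?_
  rw [mem_closedBall_zero_iff, le_div_iff₀' hδ]
  exact (hδC x hx.1).trans (norm_le_of_mem_closedBall hx.2)

theorem isClosed_image_of_ne_zero [FiniteDimensional ℝ E] (hC : IsClosed C)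
    (hsmul : ∀ t : ℝ, 0 < t → ∀ x ∈ C, t • x ∈ C) {f : E →ₗ[ℝ] F}
    (hf : ∀ x ∈ C, x ≠ 0 → f x ≠ 0) : IsClosed (f '' C) := by
  refine isClosed_of_closure_subset fun y hy => ?_
  set K := C ∩ f ⁻¹' closedBall y 1
  have hyK : y ∈ closure (f '' K) := by
    refine Metric.mem_closure_iff.2 fun ε hε => ?_
    obtain ⟨_, ⟨x, hx, rfl⟩, hxy⟩ := Metric.mem_closure_iff.1 hy (min ε 1) (by positivity)
    refine ⟨f x, ⟨x, ⟨hx, ?_⟩, rfl⟩, hxy.trans_le (min_le_left _ _)⟩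
    rw [mem_preimage, mem_closedBall, dist_comm]
    exact hxy.le.trans (min_le_right _ _)
  have hK : IsCompact (f '' K) := (isCompact_inter_preimage_closedBall hC hsmul hf y 1).image
    f.continuous_of_finiteDimensional
  exact image_mono inter_subset_left (hK.isClosed.closure_subset hyK)

theorem exists_ne_zero_mem_iInter_of_antitone [ProperSpace E] {S : ℕ → Set E} (hS : Antitone S)
    (hclosed : ∀ n, IsClosed (S n)) (hsmul : ∀ n, ∀ t : ℝ, 0 < t → ∀ x ∈ S n, t • x ∈ S n)
    (hne : ∀ n, ∃ x ∈ S n, x ≠ 0) : ∃ x ∈ ⋂ n, S n, x ≠ 0 := by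
  obtain ⟨x, hx⟩ := IsCompact.nonempty_iInter_of_sequence_nonempty_isCompact_isClosed
    (fun n => S n ∩ sphere 0 1) (fun n => inter_subset_inter_left _ (hS n.le_succ))
    (fun n => let ⟨x, hx, hx0⟩ := hne n; ⟨_, inv_norm_smul_mem_inter_sphere (hsmul n) hx hx0⟩)
    ((isCompact_sphere 0 1).inter_left (hclosed 0)) fun n => (hclosed n).inter isClosed_sphere
  rw [← iInter_inter] at hx
  exact ⟨x, hx.1, ne_zero_of_mem_sphere one_ne_zero ⟨x, hx.2⟩⟩

end PositivelyHomogeneous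

theorem mem_image_iInter_of_antitone {X Y : Type*} [TopologicalSpace X] [TopologicalSpace Y]
    [T1Space Y] {S : ℕ → Set X} {f : X → Y} {y : Y} (hS : Antitone S)
    (hclosed : ∀ n, IsClosed (S n)) (hf : Continuous f) (hfib : IsCompact (S 0 ∩ f ⁻¹' {y}))
    (hy : ∀ n, y ∈ f '' S n) : y ∈ f '' ⋂ n, S n := by
  obtain ⟨x, hx⟩ := IsCompact.nonempty_iInter_of_sequence_nonempty_isCompact_isClosed
    (fun n => S n ∩ f ⁻¹' {y}) (fun n => inter_subset_inter_left _ (hS n.le_succ))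
    (fun n => let ⟨x, hx, hxy⟩ := hy n; ⟨x, hx, hxy⟩) hfib
    fun n => (hclosed n).inter (isClosed_singleton.preimage hf)
  rw [← iInter_inter] at hx
  exact ⟨x, hx.1, hx.2⟩

section Iterates

variable {E : Type*} [AddCommGroup E] [Module ℝ E] (u : Module.End ℝ E) (C : Set E)

theorem image_pow_succ (n : ℕ) : (u ^ (n + 1)) '' C = u '' ((u ^ n) '' C) := by
  rw [pow_succ', Module.End.coe_mul, image_comp]

theorem image_pow_succ' (n : ℕ) : (u ^ (n + 1)) '' C = (u ^ n) '' (u '' C) := by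
  rw [pow_succ, Module.End.coe_mul, image_comp]

variable {u C}

theorem antitone_image_pow (hu : MapsTo u C C) : Antitone fun n : ℕ => (u ^ n) '' C :=
  antitone_nat_of_succ_le fun n => by
    rw [image_pow_succ']
    exact image_mono hu.image_subset

theorem image_iInter_image_pow_subset (hu : MapsTo u C C) :
    u '' ⋂ n : ℕ, (u ^ n) '' C ⊆ ⋂ n : ℕ, (u ^ n) '' C :=
  calc u '' ⋂ n : ℕ, (u ^ n) '' C ⊆ ⋂ n : ℕ, u '' (⇑(u ^ n) '' C) := image_iInter_subset _ _
    _ = ⋂ n : ℕ, ⇑(u ^ (n + 1)) '' C := by simp only [image_pow_succ]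
    _ ⊆ ⋂ n : ℕ, ⇑(u ^ n) '' C := iInter_mono fun n => antitone_image_pow hu n.le_succ

end Iterates

/-- If `C` is a nonzero cone of a finite-dimensional real vector space and `u` maps
`C \ {0}` into itself, then `u^∞(C) = ⋂ n, uⁿ(C)` is a nonzero cone, and
`u(u^∞(C)) = u^∞(C)`. -/
theorem infinite_intersection_cone {E : Type*} [NormedAddCommGroup E] [NormedSpace ℝ E]
    [FiniteDimensional ℝ E] (C : Set E) (hC : IsCone C)
    (hnonzero : ∃ x ∈ C, x ≠ 0) (u : Module.End ℝ E)
    (hu : ∀ x ∈ C, x ≠ 0 → u x ∈ C ∧ u x ≠ 0) :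
    IsCone (⋂ n : ℕ, (u ^ n) '' C) ∧ (∃ x ∈ ⋂ n : ℕ, (u ^ n) '' C, x ≠ 0) ∧
      u '' (⋂ n : ℕ, (u ^ n) '' C) = ⋂ n : ℕ, (u ^ n) '' C := by
  have hmaps : MapsTo u C C := fun x hx => by
    rcases eq_or_ne x 0 with rfl | hx0
    · simpa using hC.zero_mem
    · exact (hu x hx hx0).1
  have hpow (n : ℕ) : MapsTo (u ^ n) (C \ {0}) (C \ {0}) := by
    rw [Module.End.coe_pow]
    exact MapsTo.iterate (fun x hx => hu x hx.1 hx.2) n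
  have hpow_ne (n : ℕ) : ∀ x ∈ C, x ≠ 0 → (u ^ n) x ≠ 0 := fun x hx hx0 => (hpow n ⟨hx, hx0⟩).2
  have hcone (n : ℕ) : IsCone ((u ^ n) '' C) :=
    hC.image _ (isClosed_image_of_ne_zero hC.isClosed (fun _ => hC.smul_mem) (hpow_ne n))
  have hanti := antitone_image_pow hmaps
  refine ⟨IsCone.iInter hcone, ?_, ?_⟩
  · obtain ⟨x, hx, hx0⟩ := hnonzero
    exact exists_ne_zero_mem_iInter_of_antitone hanti (fun n => (hcone n).isClosed)
      (fun n _ => (hcone n).smul_mem) fun n => ⟨_, mem_image_of_mem _ hx, hpow_ne n x hx hx0⟩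
  refine (image_iInter_image_pow_subset hmaps).antisymm fun y hy => ?_
  have hfib : IsCompact (⇑(u ^ 0) '' C ∩ u ⁻¹' {y}) := by
    simpa [closedBall_zero] using isCompact_inter_preimage_closedBall hC.isClosed
      (fun _ => hC.smul_mem) (fun x hx hx0 => (hu x hx hx0).2) y 0
  refine mem_image_iInter_of_antitone hanti (fun n => (hcone n).isClosed)
    u.continuous_of_finiteDimensional hfib fun n => ?_
  rw [← image_pow_succ]
  exact mem_iInter.1 hy (n + 1)
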